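/- Fix t > 1 and let m ≥ m(x) and n ≥ n(x) for a word x in Γ, where m(x) = max_i {−(α_i(x)+w_i(x))} (at least 0) and n(x) is the largest index t such that t or t̄ appears in x. Define [x]_{m,n} = (1̄^m ⋯ n̄^m)(n^{β_n} n̄^{α_n(x)} ⋯ 1^{β_1} 1̄^{α_1(x)}) where β_i = α_i(x) + w_i(x) + m. Then w([x]_{m,n}) = w(x) and α([x]_{m,n}) = α(x); consequently u_x and u_{[x]_{m,n}} act identically on all partitions. -/

import Mathlib

/-- Alphabet Γ = ℕ ∪ ℕ̄ : a letter is `(false, i)` for unbarred `i` (up-operator)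
and `(true, i)` for barred `ī` (down-operator); indices of interest are `i ≥ 1`. -/
abbrev Γ : Type := Bool × ℕ

/-- `c : ℕ → ℕ` records the column lengths `λ'_i` (for `i ≥ 1`) of a partition:
nonincreasing, eventually zero; `c 0 = 0` is a normalization. -/
def IsPartition (c : ℕ → ℕ) : Prop :=
  (∀ i, 1 ≤ i → c (i + 1) ≤ c i) ∧ c 0 = 0 ∧ ∃ N, ∀ i, N ≤ i → c i = 0

open scoped Classical in
/-- The up-operator `u_i`: add a box to column `i` if the result is a partition, else `0` (`none`). -/
noncomputable def upFun (i : ℕ) (c : ℕ → ℕ) : Option (ℕ → ℕ) :=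
  if 1 ≤ i ∧ IsPartition (Function.update c i (c i + 1)) then
    some (Function.update c i (c i + 1)) else none

open scoped Classical in
/-- The down-operator `d_i`: remove a box from column `i` if the result is a partition, else `0`. -/
noncomputable def downFun (i : ℕ) (c : ℕ → ℕ) : Option (ℕ → ℕ) :=
  if 1 ≤ i ∧ 1 ≤ c i ∧ IsPartition (Function.update c i (c i - 1)) then
    some (Function.update c i (c i - 1)) else none

/-- `u_i` extended to `0` (operators applied to `0` give `0`). -/
noncomputable def U (i : ℕ) (o : Option (ℕ → ℕ)) : Option (ℕ → ℕ) := o.bind (upFun i)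

/-- `d_i` extended to `0`. -/
noncomputable def D (i : ℕ) (o : Option (ℕ → ℕ)) : Option (ℕ → ℕ) := o.bind (downFun i)

/-- The action `u_x` of a word `x` on (possibly zero) partitions, rightmost letter acting first. -/
noncomputable def act (x : List Γ) (o : Option (ℕ → ℕ)) : Option (ℕ → ℕ) :=
  x.foldr (fun l o => if l.1 then D l.2 o else U l.2 o) o

/-- The weight `w_j(x)`: occurrences of `j` minus occurrences of `j̄` in `x`. -/
def wt (j : ℕ) (x : List Γ) : ℤ :=
  (x.count ((false, j) : Γ) : ℤ) - (x.count ((true, j) : Γ) : ℤ)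

/-- `α_i(x)`: the maximum of `w_{i+1}(x̃) - w_i(x̃)` over all suffix subwords `x̃` of `x`
(including the empty suffix, which contributes `0`). -/
def alphaV (i : ℕ) (x : List Γ) : ℤ :=
  (x.tails.map (fun s => wt (i + 1) s - wt i s)).foldr max 0

/-- The representative word `[x]_{m,n} = (1̄^m ⋯ n̄^m)(n^{β_n} n̄^{α_n} ⋯ 1^{β_1} 1̄^{α_1})`
where `β_i = α_i(x) + w_i(x) + m`. -/
noncomputable def rep (x : List Γ) (m n : ℕ) : List Γ :=
  ((List.range n).map (fun k => List.replicate m ((true, k + 1) : Γ))).flatten ++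
  ((List.range n).reverse.map (fun k =>
      List.replicate ((alphaV (k + 1) x + wt (k + 1) x + m).toNat) ((false, k + 1) : Γ) ++
      List.replicate ((alphaV (k + 1) x).toNat) ((true, k + 1) : Γ))).flatten

/-!
Only the letters `i` and `i + 1` matter for `w_i`, `w_{i+1}` and `α_i`; after deleting all
others, `[x]_{m,n}` becomes `ī^m (i+1)̄^m (i+1)^{β_{i+1}} (i+1)̄^{α_{i+1}} i^{β_i} ī^{α_i}`,
and its weights and `α_i` follow from
`α_i(a b) = max (α_i(a) + w_{i+1}(b) - w_i(b)) (α_i(b))`.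

For the action, `u_x c` is either `0` or `c + w(x)`, and it is nonzero exactly when `c + w(s)`
is a partition for every suffix `s` of `x`. For a partition `c` this says
`w_{i+1}(s) - w_i(s) ≤ c_i - c_{i+1}` for all suffixes `s` and all `i`,
i.e. `α_i(x) ≤ c_i - c_{i+1}`. So `u_x` depends on `x` only through `w(x)` and `α(x)`.
-/

def wtDiff (i : ℕ) (s : List Γ) : ℤ := wt (i + 1) s - wt i s

section Weights

variable (i j : ℕ)

@[simp] lemma wt_nil : wt j [] = 0 := by simp [wt]

lemma wt_append (a b : List Γ) : wt j (a ++ b) = wt j a + wt j b := by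
  simp only [wt, List.count_append]; push_cast; ring

lemma wt_cons (b : Bool) (k : ℕ) (y : List Γ) :
    wt j ((b, k) :: y) = wt j y + if k = j then (if b then -1 else 1) else 0 := by
  rcases b <;> by_cases h : k = j <;> simp [wt, h] <;> ring

lemma wt_replicate (r : ℕ) (b : Bool) (k : ℕ) :
    wt j (List.replicate r (b, k)) = r * if k = j then (if b then -1 else 1) else 0 := by
  induction r with
  | zero => simp
  | succ r ih => rw [List.replicate_succ, wt_cons, ih]; push_cast; ring

lemma wt_eq_zero_of_forall_ne {x : List Γ} (h : ∀ l ∈ x, l.2 ≠ j) : wt j x = 0 := by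
  have hf : (false, j) ∉ x := fun hm => h _ hm rfl
  have ht : (true, j) ∉ x := fun hm => h _ hm rfl
  simp [wt, List.count_eq_zero_of_not_mem hf, List.count_eq_zero_of_not_mem ht]

lemma wt_zero_of_index_pos {x : List Γ} (hx : ∀ l ∈ x, 1 ≤ l.2) : wt 0 x = 0 :=
  wt_eq_zero_of_forall_ne 0 fun l hl => Nat.one_le_iff_ne_zero.1 (hx l hl)

lemma wt_filter {p : Γ → Bool} (hp : ∀ b, p (b, j)) (x : List Γ) :
    wt j (x.filter p) = wt j x := by
  simp only [wt, List.count_filter (hp _)]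

lemma wtDiff_append (a b : List Γ) : wtDiff i (a ++ b) = wtDiff i a + wtDiff i b := by
  simp only [wtDiff, wt_append]; ring

lemma wtDiff_replicate (r : ℕ) (l : Γ) :
    wtDiff i (List.replicate r l) = r * wtDiff i [l] := by
  obtain ⟨b, k⟩ := l
  simp only [wtDiff, wt_replicate, ← List.replicate_one]; push_cast; ring

@[simp] lemma alphaV_nil : alphaV i [] = 0 := by simp [alphaV]

lemma alphaV_cons (l : Γ) (y : List Γ) :
    alphaV i (l :: y) = max (wtDiff i (l :: y)) (alphaV i y) := by
  simp [alphaV, wtDiff]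

lemma alphaV_nonneg (x : List Γ) : 0 ≤ alphaV i x := by
  induction x with
  | nil => simp
  | cons l y ih => rw [alphaV_cons]; exact ih.trans (le_max_right _ _)

lemma wtDiff_le_alphaV (x : List Γ) : wtDiff i x ≤ alphaV i x := by
  cases x with
  | nil => simp [wtDiff]
  | cons l y => rw [alphaV_cons]; exact le_max_left _ _

lemma alphaV_le_iff {K : ℤ} (hK : 0 ≤ K) (x : List Γ) :
    alphaV i x ≤ K ↔ ∀ s ∈ x.tails, wtDiff i s ≤ K := by
  induction x with
  | nil => simp [wtDiff, hK]
  | cons l y ih => simp [alphaV_cons, ih]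

lemma alphaV_append (a b : List Γ) :
    alphaV i (a ++ b) = max (alphaV i a + wtDiff i b) (alphaV i b) := by
  induction a with
  | nil => simp [wtDiff_le_alphaV]
  | cons l y ih =>
    have hd := wtDiff_append i (l :: y) b
    rw [List.cons_append] at hd
    rw [List.cons_append, alphaV_cons, ih, alphaV_cons, hd]
    have := alphaV_nonneg i b
    omega

lemma alphaV_replicate (r : ℕ) (l : Γ) :
    alphaV i (List.replicate r l) = max 0 (r * wtDiff i [l]) := by
  induction r with
  | zero => simp
  | succ r ih =>
    rw [List.replicate_succ, ← List.singleton_append, alphaV_append, ih, wtDiff_replicate,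
      alphaV_cons, alphaV_nil]
    push_cast
    rw [add_mul, one_mul]
    rcases le_total 0 (wtDiff i [l]) with h | h
    · have := mul_nonneg (Nat.cast_nonneg (α := ℤ) r) h
      omega
    · have := mul_nonpos_of_nonneg_of_nonpos (Nat.cast_nonneg (α := ℤ) r) h
      omega

lemma alphaV_filter {p : Γ → Bool} (hp : ∀ b, p (b, i) ∧ p (b, i + 1)) (x : List Γ) :
    alphaV i (x.filter p) = alphaV i x := by
  have hw (s : List Γ) : wtDiff i (s.filter p) = wtDiff i s := by
    simp only [wtDiff, wt_filter _ (fun b => (hp b).1), wt_filter _ (fun b => (hp b).2)]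
  induction x with
  | nil => simp
  | cons l y ih =>
    by_cases hl : p l
    · rw [List.filter_cons_of_pos hl, alphaV_cons, alphaV_cons, ih, ← hw (l :: y),
        List.filter_cons_of_pos hl]
    · obtain ⟨b, k⟩ := l
      have hk : k ≠ i ∧ k ≠ i + 1 := ⟨fun h => by subst h; simp [(hp b).1] at hl,
        fun h => by subst h; simp [(hp b).2] at hl⟩
      rw [List.filter_cons_of_neg hl, alphaV_cons, ih]
      have hskip : wtDiff i ((b, k) :: y) = wtDiff i y := by
        simp [wtDiff, wt_cons, hk.1, hk.2]
      rw [hskip, max_eq_right (wtDiff_le_alphaV i y)]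

end Weights

def IsIntPartition (e : ℕ → ℤ) : Prop := (∀ i, 0 ≤ e i) ∧ IsPartition (Int.toNat ∘ e)

def addWt (c : ℕ → ℕ) (s : List Γ) : ℕ → ℤ := fun i => c i + wt i s

lemma isIntPartition_iff_forall_succ_le {e : ℕ → ℤ} (he0 : e 0 = 0)
    (hN : ∃ N, ∀ i, N ≤ i → e i = 0) :
    IsIntPartition e ↔ ∀ i, 1 ≤ i → e (i + 1) ≤ e i := by
  constructor
  · rintro ⟨hnn, hmono, -⟩ i hi
    have := hmono i hi
    simp only [Function.comp_apply] at this
    have := hnn i; have := hnn (i + 1)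
    omega
  · intro hmono
    obtain ⟨N, hN⟩ := hN
    have hanti (i : ℕ) (hi : 1 ≤ i) : ∀ k, i ≤ k → e k ≤ e i :=
      Nat.le_induction le_rfl fun k hik ih => (hmono k (hi.trans hik)).trans ih
    have hnn (i : ℕ) : 0 ≤ e i := by
      rcases Nat.eq_zero_or_pos i with rfl | hi
      · exact he0.ge
      · exact (hN _ (le_max_left N i)).symm.le.trans (hanti i hi _ (le_max_right N i))
    refine ⟨hnn, fun i hi => ?_, by simp [he0], ⟨N, fun i hi => by simp [hN i hi]⟩⟩
    have := hmono i hi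
    simp only [Function.comp_apply]
    omega

section Operators

variable {e : ℕ → ℤ} {j : ℕ}

open scoped Classical in
lemma upFun_toNat_comp (he : ∀ i, 0 ≤ e i) (hj : 1 ≤ j) :
    upFun j (Int.toNat ∘ e) = if IsIntPartition (Function.update e j (e j + 1))
      then some (Int.toNat ∘ Function.update e j (e j + 1)) else none := by
  have hupd : Int.toNat ∘ Function.update e j (e j + 1) =
      Function.update (Int.toNat ∘ e) j ((Int.toNat ∘ e) j + 1) := by
    rw [Function.comp_update, Function.comp_apply]
    congr 1
    have := he j
    omega
  have hnn : ∀ i, 0 ≤ Function.update e j (e j + 1) i := by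
    intro i
    rcases eq_or_ne i j with rfl | h
    · simp only [Function.update_self]; linarith [he i]
    · simp only [Function.update_of_ne h, he]
  simp only [upFun, IsIntPartition, hupd, hj, true_and, hnn, implies_true]

open scoped Classical in
lemma downFun_toNat_comp (he : ∀ i, 0 ≤ e i) (hj : 1 ≤ j) :
    downFun j (Int.toNat ∘ e) = if IsIntPartition (Function.update e j (e j - 1))
      then some (Int.toNat ∘ Function.update e j (e j - 1)) else none := by
  have hupd : Int.toNat ∘ Function.update e j (e j - 1) =
      Function.update (Int.toNat ∘ e) j ((Int.toNat ∘ e) j - 1) := by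
    rw [Function.comp_update, Function.comp_apply]
    congr 1
    have := he j
    omega
  have hnn : (∀ i, 0 ≤ Function.update e j (e j - 1) i) ↔ 1 ≤ (Int.toNat ∘ e) j := by
    constructor
    · intro h
      have := h j
      simp only [Function.update_self, Function.comp_apply] at this ⊢
      omega
    · intro h i
      rcases eq_or_ne i j with rfl | hij
      · simp only [Function.update_self]
        simp only [Function.comp_apply] at h
        omega
      · simp only [Function.update_of_ne hij, he]
  simp only [downFun, IsIntPartition, hupd, hj, true_and, hnn]

end Operators

lemma addWt_nil (c : ℕ → ℕ) : addWt c [] = fun i => (c i : ℤ) := by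
  funext i; simp [addWt]

lemma addWt_cons (c : ℕ → ℕ) (b : Bool) (j : ℕ) (y : List Γ) :
    addWt c ((b, j) :: y) = Function.update (addWt c y) j
      (if b then addWt c y j - 1 else addWt c y j + 1) := by
  funext i
  rcases eq_or_ne i j with rfl | h
  · rcases b <;> simp [addWt, wt_cons] <;> ring
  · simp [addWt, wt_cons, h, Ne.symm h]

open scoped Classical in
lemma act_some_eq_ite_tails {x : List Γ} (hx : ∀ l ∈ x, 1 ≤ l.2) {c : ℕ → ℕ}
    (hc : IsPartition c) :
    act x (some c) = if ∀ s ∈ x.tails, IsIntPartition (addWt c s)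
      then some (Int.toNat ∘ addWt c x) else none := by
  induction x with
  | nil =>
    have hc' : (Int.toNat ∘ fun i => (c i : ℤ)) = c := by funext i; simp
    simp [act, IsIntPartition, addWt_nil, hc', hc]
  | cons l y ih =>
    obtain ⟨b, j⟩ := l
    have hj : 1 ≤ j := hx _ List.mem_cons_self
    rw [show act ((b, j) :: y) (some c) =
        if b then D j (act y (some c)) else U j (act y (some c)) from rfl,
      ih fun l hl => hx l (List.mem_cons_of_mem _ hl), List.tails_cons]
    simp only [List.forall_mem_cons]
    by_cases hy : ∀ s ∈ y.tails, IsIntPartition (addWt c s)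
    · have he := (hy y ((List.mem_tails _ _).2 (List.suffix_refl y))).1
      simp only [if_pos hy, and_iff_left hy]
      rcases b
      · simp only [U, Option.bind_some, upFun_toNat_comp he hj, addWt_cons]; rfl
      · simp only [D, Option.bind_some, downFun_toNat_comp he hj, addWt_cons]; rfl
    · have hxy : ¬(IsIntPartition (addWt c ((b, j) :: y)) ∧
          ∀ s ∈ y.tails, IsIntPartition (addWt c s)) := fun h => hy h.2
      rw [if_neg hy, if_neg hxy]
      rcases b <;> rfl

lemma isIntPartition_addWt_iff {c : ℕ → ℕ} (hc : IsPartition c) {s : List Γ}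
    (hs : ∀ l ∈ s, 1 ≤ l.2) :
    IsIntPartition (addWt c s) ↔ ∀ i, 1 ≤ i → wtDiff i s ≤ c i - c (i + 1) := by
  obtain ⟨-, hc0, N, hN⟩ := hc
  have h0 : addWt c s 0 = 0 := by simp [addWt, hc0, wt_zero_of_index_pos hs]
  have hfar : ∃ M, ∀ i, M ≤ i → addWt c s i = 0 := by
    refine ⟨max N (s.toFinset.sup Prod.snd + 1), fun i hi => ?_⟩
    have hi' : ∀ l ∈ s, l.2 ≠ i := fun l hl =>
      ((Finset.le_sup (f := Prod.snd) (List.mem_toFinset.2 hl)).trans_lt (by omega)).ne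
    simp [addWt, hN i (le_of_max_le_left hi), wt_eq_zero_of_forall_ne i hi']
  rw [isIntPartition_iff_forall_succ_le h0 hfar]
  refine forall₂_congr fun i _ => ?_
  simp only [addWt, wtDiff]
  constructor <;> intro h <;> linarith

open scoped Classical in
lemma act_some_eq_ite {x : List Γ} (hx : ∀ l ∈ x, 1 ≤ l.2) {c : ℕ → ℕ}
    (hc : IsPartition c) :
    act x (some c) = if ∀ i, 1 ≤ i → alphaV i x ≤ c i - c (i + 1)
      then some (Int.toNat ∘ addWt c x) else none := by
  rw [act_some_eq_ite_tails hx hc]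
  refine if_congr ?_ rfl rfl
  have hsuf {s : List Γ} (hs : s ∈ x.tails) : ∀ l ∈ s, 1 ≤ l.2 :=
    fun l hl => hx l (((List.mem_tails _ _).1 hs).subset hl)
  have hgap (i : ℕ) (hi : 1 ≤ i) : (0 : ℤ) ≤ c i - c (i + 1) := by
    have := hc.1 i hi; omega
  calc (∀ s ∈ x.tails, IsIntPartition (addWt c s))
      ↔ ∀ s ∈ x.tails, ∀ i, 1 ≤ i → wtDiff i s ≤ c i - c (i + 1) :=
        forall₂_congr fun s hs => isIntPartition_addWt_iff hc (hsuf hs)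
    _ ↔ ∀ i, 1 ≤ i → ∀ s ∈ x.tails, wtDiff i s ≤ c i - c (i + 1) :=
        ⟨fun h i hi s hs => h s hs i hi, fun h s hs i hi => h i hi s hs⟩
    _ ↔ ∀ i, 1 ≤ i → alphaV i x ≤ c i - c (i + 1) :=
        forall₂_congr fun i hi => (alphaV_le_iff i (hgap i hi) x).symm

lemma List.filter_flatten_map_of_filter_eq {α β : Type*} {p : α → Bool} {q : β → Bool}
    {G : β → List α} (hG : ∀ k, (G k).filter p = if q k then G k else []) (L : List β) :
    (L.map G).flatten.filter p = ((L.filter q).map G).flatten := by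
  induction L with
  | nil => rfl
  | cons k L ih => by_cases hq : q k <;> simp [hG, hq, ih]

lemma List.range_filter_succ_eq_or_eq {i : ℕ} (hi : 1 ≤ i) (n : ℕ) :
    (List.range n).filter (fun k => k + 1 = i || k + 1 = i + 1) =
      (if i ≤ n then [i - 1] else []) ++ (if i < n then [i] else []) := by
  induction n with
  | zero => simp; omega
  | succ n ih =>
    rw [List.range_succ, List.filter_append, ih]
    rcases lt_trichotomy (n + 1) i with h | rfl | h
    · simp [show ¬ i ≤ n by omega, show ¬ i ≤ n + 1 by omega, show n + 1 ≠ i by omega]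
      omega
    · simp
    · rcases lt_trichotomy n i with h' | rfl | h'
      · omega
      · simp
      · simp [h'.le, h', h.le, show n + 1 ≠ i by omega, h'.ne']

/-- The block `j^{β_j} j̄^{α_j}` of `[x]_{m,n}`. -/
noncomputable def repBlock (x : List Γ) (m j : ℕ) : List Γ :=
  List.replicate ((alphaV j x + wt j x + m).toNat) (false, j) ++
    List.replicate ((alphaV j x).toNat) (true, j)

lemma rep_eq (x : List Γ) (m n : ℕ) :
    rep x m n = ((List.range n).map fun k => List.replicate m (true, k + 1)).flatten ++
      ((List.range n).reverse.map fun k => repBlock x m (k + 1)).flatten := rfl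

lemma rep_filter (x : List Γ) (m n : ℕ) {i : ℕ} (hi : 1 ≤ i) :
    (rep x m n).filter (fun l => l.2 = i || l.2 = i + 1) =
      (if i ≤ n then List.replicate m (true, i) else []) ++
      (if i < n then List.replicate m (true, i + 1) else []) ++
      ((if i < n then repBlock x m (i + 1) else []) ++
        (if i ≤ n then repBlock x m i else [])) := by
  rw [rep_eq, List.filter_append,
    List.filter_flatten_map_of_filter_eq (q := fun k => k + 1 = i || k + 1 = i + 1),
    List.filter_flatten_map_of_filter_eq (q := fun k => k + 1 = i || k + 1 = i + 1),
    List.filter_reverse, List.range_filter_succ_eq_or_eq hi]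
  · by_cases h1 : i < n <;> by_cases h2 : i ≤ n <;> simp [h1, h2, Nat.sub_add_cancel hi]
  · intro k; simp only [repBlock, List.filter_append, List.filter_replicate]; split_ifs <;> rfl
  · intro k; simp [List.filter_replicate]

lemma wt_rep_eq_and_alphaV_rep_eq {x : List Γ} {m n : ℕ}
    (hm : ∀ i, 1 ≤ i → -(alphaV i x + wt i x) ≤ (m : ℤ))
    (hn : ∀ l ∈ x, l.2 ≤ n) {i : ℕ} (hi : 1 ≤ i) :
    wt i (rep x m n) = wt i x ∧ alphaV i (rep x m n) = alphaV i x := by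
  set p : Γ → Bool := fun l => l.2 = i || l.2 = i + 1
  have hpi (b : Bool) : p (b, i) := by simp [p]
  have hpi' (b : Bool) : p (b, i + 1) := by simp [p]
  rw [← wt_filter i hpi, ← alphaV_filter i (fun b => ⟨hpi b, hpi' b⟩), rep_filter x m n hi]
  have hα := alphaV_nonneg i x
  have hβ := hm i hi
  have hδ := wtDiff_le_alphaV i x
  unfold wtDiff at hδ
  rcases lt_trichotomy i n with h | rfl | h
  · have hα' := alphaV_nonneg (i + 1) x
    have hβ' := hm (i + 1) (by omega)
    simp [h, h.le, repBlock, alphaV_append, alphaV_replicate, wtDiff, wt_cons, wt_append,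
      wt_replicate]
    omega
  · have hw : wt (i + 1) x = 0 :=
      wt_eq_zero_of_forall_ne _ fun l hl => by have := hn l hl; omega
    simp [repBlock, alphaV_append, alphaV_replicate, wtDiff, wt_cons, wt_append, wt_replicate]
    omega
  · have hx : x.filter p = [] := List.filter_eq_nil_iff.2 fun l hl => by
      have := hn l hl; simp [p]; omega
    rw [← wt_filter i hpi x, ← alphaV_filter i (fun b => ⟨hpi b, hpi' b⟩) x, hx]
    simp [not_lt.2 h.le, not_le.2 h]

lemma rep_index_pos (x : List Γ) (m n : ℕ) : ∀ l ∈ rep x m n, 1 ≤ l.2 := by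
  intro l hl
  simp only [rep_eq, repBlock, List.mem_append, List.mem_flatten, List.mem_map,
    List.mem_reverse] at hl
  obtain ⟨_, ⟨k, -, rfl⟩, hl⟩ | ⟨_, ⟨k, -, rfl⟩, hl⟩ := hl
  · simp [List.eq_of_mem_replicate hl]
  · rcases List.mem_append.1 hl with hl | hl <;> simp [List.eq_of_mem_replicate hl]

theorem general_representative (x : List Γ) (hx : ∀ l ∈ x, 1 ≤ l.2)
    (m n : ℕ)
    (hm : ∀ i, 1 ≤ i → -(alphaV i x + wt i x) ≤ (m : ℤ))
    (hn : ∀ l ∈ x, l.2 ≤ n) :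
    (∀ i, 1 ≤ i → wt i (rep x m n) = wt i x ∧ alphaV i (rep x m n) = alphaV i x) ∧
    (∀ c : ℕ → ℕ, IsPartition c → act (rep x m n) (some c) = act x (some c)) := by
  classical
  refine ⟨fun i hi => wt_rep_eq_and_alphaV_rep_eq hm hn hi, fun c hc => ?_⟩
  have hwt : addWt c (rep x m n) = addWt c x := by
    funext i
    rcases Nat.eq_zero_or_pos i with rfl | hi
    · simp [addWt, wt_zero_of_index_pos (rep_index_pos x m n), wt_zero_of_index_pos hx]
    · simp [addWt, (wt_rep_eq_and_alphaV_rep_eq hm hn hi).1]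
  rw [act_some_eq_ite (rep_index_pos x m n) hc, act_some_eq_ite hx hc, hwt]
  exact if_congr (forall₂_congr fun i hi => by rw [(wt_rep_eq_and_alphaV_rep_eq hm hn hi).2])
    rfl rfl
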